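/- The quantity C(t) = 2‖T₁(t)‖² + ‖T₂(t)‖² + ‖T₃(t)‖² is conserved along any solution of the reduced Nahm–Schmid equations. -/

import Mathlib

/-!
Invariance makes `⟪⁅x, y⁆, z⟫` alternating in `x, y, z`. Differentiating
`C = 2‖T₁‖² + ‖T₂‖² + ‖T₃‖²` along a solution gives `2β (2 - 1 - 1) = 0` with
`β = ⟪⁅T₃, T₂⁆, T₁⟫`, so `C` has zero derivative everywhere.
-/

open scoped RealInnerProductSpace

set_option linter.overlappingInstances false

section InvariantInner

-- The additive structure of the Lie ring is unrelated to that of the normed group, so the inner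
-- product is not known to be additive for the Lie ring's operations; `hinv` is the only link.
-- In particular `lie_skew` gives no antisymmetry of `⟪⁅x, y⁆, z⟫` in `x, y` directly: it is
-- obtained from the transpositions of `y, z` and of `x, z`.
variable {𝔤 : Type*} [NormedAddCommGroup 𝔤] [InnerProductSpace ℝ 𝔤] [LieRing 𝔤]
  (hinv : ∀ x y z : 𝔤, ⟪⁅x, y⁆, z⟫ = -⟪y, ⁅x, z⁆⟫)
include hinv

theorem inner_lie_swap_right (x y z : 𝔤) : ⟪⁅x, y⁆, z⟫ = -⟪⁅x, z⁆, y⟫ := by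
  rw [hinv, real_inner_comm]

theorem inner_lie_swap_outer (x y z : 𝔤) : ⟪⁅x, y⁆, z⟫ = -⟪⁅z, y⁆, x⟫ := by
  have hxy : ⁅x, y⁆ = ⁅-y, x⁆ := by rw [neg_lie, lie_skew]
  have hzy : ⁅-y, z⁆ = ⁅z, y⁆ := by rw [neg_lie, lie_skew]
  rw [hxy, hinv, hzy, real_inner_comm]

theorem inner_lie_swap_left (x y z : 𝔤) : ⟪⁅x, y⁆, z⟫ = -⟪⁅y, x⁆, z⟫ := by
  rw [inner_lie_swap_outer hinv, inner_lie_swap_right hinv, inner_lie_swap_outer hinv, neg_neg]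

theorem two_mul_inner_neg_lie_add_inner_lie_add_inner_lie (x y z : 𝔤) :
    2 * ⟪x, -⁅y, z⁆⟫ + ⟪y, ⁅z, x⁆⟫ + ⟪z, ⁅x, y⁆⟫ = 0 := by
  have hx : ⟪x, -⁅y, z⁆⟫ = ⟪⁅z, y⁆, x⟫ := by rw [lie_skew, real_inner_comm]
  have hy : ⟪y, ⁅z, x⁆⟫ = -⟪⁅z, y⁆, x⟫ := by rw [real_inner_comm, inner_lie_swap_right hinv]
  have hz : ⟪z, ⁅x, y⁆⟫ = -⟪⁅z, y⁆, x⟫ := by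
    rw [real_inner_comm, inner_lie_swap_outer hinv, inner_lie_swap_left hinv, neg_neg,
      inner_lie_swap_right hinv]
  rw [hx, hy, hz]
  ring

end InvariantInner

theorem reduced_nahm_schmid_C_conserved_general
    {𝔤 : Type*} [NormedAddCommGroup 𝔤] [InnerProductSpace ℝ 𝔤]
    [LieRing 𝔤]
    (hinv : ∀ x y z : 𝔤, ⟪⁅x, y⁆, z⟫ = -⟪y, ⁅x, z⁆⟫)
    (T₁ T₂ T₃ : ℝ → 𝔤)
    (h1 : ∀ t, @HasDerivAt ℝ _ 𝔤 NormedAddCommGroup.toAddCommGroup NormedSpace.toModule _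
      (@IsBoundedSMul.continuousSMul ℝ 𝔤 _ _ _ (@AddCommGroup.toAddGroup 𝔤 NormedAddCommGroup.toAddCommGroup).toSubNegMonoid.toAddMonoid.toZero (@NormedSpace.toModule ℝ 𝔤 _ _ _).toSMul NormedSpace.toIsBoundedSMul)
      T₁ (-⁅T₂ t, T₃ t⁆) t)
    (h2 : ∀ t, @HasDerivAt ℝ _ 𝔤 NormedAddCommGroup.toAddCommGroup NormedSpace.toModule _
      (@IsBoundedSMul.continuousSMul ℝ 𝔤 _ _ _ (@AddCommGroup.toAddGroup 𝔤 NormedAddCommGroup.toAddCommGroup).toSubNegMonoid.toAddMonoid.toZero (@NormedSpace.toModule ℝ 𝔤 _ _ _).toSMul NormedSpace.toIsBoundedSMul)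
      T₂ (⁅T₃ t, T₁ t⁆) t)
    (h3 : ∀ t, @HasDerivAt ℝ _ 𝔤 NormedAddCommGroup.toAddCommGroup NormedSpace.toModule _
      (@IsBoundedSMul.continuousSMul ℝ 𝔤 _ _ _ (@AddCommGroup.toAddGroup 𝔤 NormedAddCommGroup.toAddCommGroup).toSubNegMonoid.toAddMonoid.toZero (@NormedSpace.toModule ℝ 𝔤 _ _ _).toSMul NormedSpace.toIsBoundedSMul)
      T₃ (⁅T₁ t, T₂ t⁆) t) :
    ∀ t, 2 * ‖T₁ t‖ ^ 2 + ‖T₂ t‖ ^ 2 + ‖T₃ t‖ ^ 2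
        = 2 * ‖T₁ 0‖ ^ 2 + ‖T₂ 0‖ ^ 2 + ‖T₃ 0‖ ^ 2 := by
  have hC : ∀ t, HasDerivAt (fun t => 2 * ‖T₁ t‖ ^ 2 + ‖T₂ t‖ ^ 2 + ‖T₃ t‖ ^ 2) 0 t := by
    intro t
    refine ((((h1 t).norm_sq.const_mul 2).add (h2 t).norm_sq).add (h3 t).norm_sq).congr_deriv ?_
    linear_combination
      2 * two_mul_inner_neg_lie_add_inner_lie_add_inner_lie hinv (T₁ t) (T₂ t) (T₃ t)
  exact fun t => is_const_of_deriv_eq_zero (fun s => (hC s).differentiableAt)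
    (fun s => (hC s).deriv) t 0

/-- The quantity `C(t) = 2‖T₁(t)‖² + ‖T₂(t)‖² + ‖T₃(t)‖²` is conserved along
any solution of the reduced Nahm–Schmid equations. -/
theorem reduced_nahm_schmid_C_conserved
    {𝔤 : Type*} [NormedAddCommGroup 𝔤] [InnerProductSpace ℝ 𝔤]
    [LieRing 𝔤] [LieAlgebra ℝ 𝔤]
    (hinv : ∀ x y z : 𝔤, ⟪⁅x, y⁆, z⟫ = -⟪y, ⁅x, z⁆⟫)
    (T₁ T₂ T₃ : ℝ → 𝔤)
    (h1 : ∀ t, @HasDerivAt ℝ _ 𝔤 NormedAddCommGroup.toAddCommGroup NormedSpace.toModule _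
      (@IsBoundedSMul.continuousSMul ℝ 𝔤 _ _ _ (@AddCommGroup.toAddGroup 𝔤 NormedAddCommGroup.toAddCommGroup).toSubNegMonoid.toAddMonoid.toZero (@NormedSpace.toModule ℝ 𝔤 _ _ _).toSMul NormedSpace.toIsBoundedSMul)
      T₁ (-⁅T₂ t, T₃ t⁆) t)
    (h2 : ∀ t, @HasDerivAt ℝ _ 𝔤 NormedAddCommGroup.toAddCommGroup NormedSpace.toModule _
      (@IsBoundedSMul.continuousSMul ℝ 𝔤 _ _ _ (@AddCommGroup.toAddGroup 𝔤 NormedAddCommGroup.toAddCommGroup).toSubNegMonoid.toAddMonoid.toZero (@NormedSpace.toModule ℝ 𝔤 _ _ _).toSMul NormedSpace.toIsBoundedSMul)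
      T₂ (⁅T₃ t, T₁ t⁆) t)
    (h3 : ∀ t, @HasDerivAt ℝ _ 𝔤 NormedAddCommGroup.toAddCommGroup NormedSpace.toModule _
      (@IsBoundedSMul.continuousSMul ℝ 𝔤 _ _ _ (@AddCommGroup.toAddGroup 𝔤 NormedAddCommGroup.toAddCommGroup).toSubNegMonoid.toAddMonoid.toZero (@NormedSpace.toModule ℝ 𝔤 _ _ _).toSMul NormedSpace.toIsBoundedSMul)
      T₃ (⁅T₁ t, T₂ t⁆) t) :
    ∀ t, 2 * ‖T₁ t‖ ^ 2 + ‖T₂ t‖ ^ 2 + ‖T₃ t‖ ^ 2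
        = 2 * ‖T₁ 0‖ ^ 2 + ‖T₂ 0‖ ^ 2 + ‖T₃ 0‖ ^ 2 :=
  reduced_nahm_schmid_C_conserved_general hinv T₁ T₂ T₃ h1 h2 h3
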